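/- Under the hypotheses of the previous statement with m^t factored as a product m^t = M_B^t M_A^t of matrices whose concatenation has squared Frobenius norm equal to ‖M_B^t‖_F² + ‖M_A^t‖_F², it holds that E[‖M_B^{t+1} M_A^{t+1}‖_F] ≤ (2(1-O)/O²) · max_{0 ≤ i ≤ t} ‖Δ̃^i‖_F². -/
import Mathlib


open MeasureTheory

lemma frob_amgm {d r ℓ : ℕ} (B : Matrix (Fin d) (Fin r) ℝ) (A : Matrix (Fin r) (Fin ℓ) ℝ) :
    Real.sqrt (∑ i, ∑ j, ((B * A) i j) ^ 2) ≤
      ((∑ i, ∑ j, (B i j) ^ 2) + (∑ i, ∑ j, (A i j) ^ 2)) / 2 := by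
  set a := ∑ i, ∑ j, (B i j) ^ 2 with ha
  set b := ∑ i, ∑ j, (A i j) ^ 2 with hb
  have hann : 0 ≤ a := Finset.sum_nonneg fun _ _ => Finset.sum_nonneg fun _ _ => sq_nonneg _
  have hbnn : 0 ≤ b := Finset.sum_nonneg fun _ _ => Finset.sum_nonneg fun _ _ => sq_nonneg _
  have key : (∑ i, ∑ j, ((B * A) i j) ^ 2) ≤ a * b := by
    have h1 : ∀ i j, ((B * A) i j) ^ 2 ≤ (∑ k, (B i k) ^ 2) * (∑ k, (A k j) ^ 2) := by
      intro i j
      simpa [Matrix.mul_apply] using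
        Finset.sum_mul_sq_le_sq_mul_sq Finset.univ (fun k => B i k) (fun k => A k j)
    calc (∑ i, ∑ j, ((B * A) i j) ^ 2)
        ≤ ∑ i, ∑ j, (∑ k, (B i k) ^ 2) * (∑ k, (A k j) ^ 2) :=
          Finset.sum_le_sum fun i _ => Finset.sum_le_sum fun j _ => h1 i j
      _ = a * b := by
          have hbswap : b = ∑ j, ∑ k, (A k j) ^ 2 := Finset.sum_comm ..
          rw [hbswap]
          exact (Finset.sum_mul_sum Finset.univ Finset.univ
            (fun i => ∑ j, (B i j) ^ 2) (fun j => ∑ k, (A k j) ^ 2)).symm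
  calc Real.sqrt (∑ i, ∑ j, ((B * A) i j) ^ 2)
      ≤ Real.sqrt (a * b) := Real.sqrt_le_sqrt key
    _ = Real.sqrt a * Real.sqrt b := Real.sqrt_mul hann _
    _ ≤ (a + b) / 2 := by
        nlinarith [two_mul_le_add_sq (Real.sqrt a) (Real.sqrt b),
          Real.sq_sqrt hann, Real.sq_sqrt hbnn]

theorem stmt9 {Ω : Type*} [MeasurableSpace Ω] (μ : Measure Ω) [IsProbabilityMeasure μ]
    {d r ℓ : ℕ} (O : ℝ) (hO1 : 0 < O) (hO2 : O < 1) (t : ℕ)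
    (MB : ℕ → Ω → Matrix (Fin d) (Fin r) ℝ)
    (MA : ℕ → Ω → Matrix (Fin r) (Fin ℓ) ℝ)
    (ΔB : ℕ → Matrix (Fin d) (Fin r) ℝ)
    (ΔA : ℕ → Matrix (Fin r) (Fin ℓ) ℝ)
    (hInt : Integrable (fun ω =>
      (∑ i, ∑ j, (MB (t + 1) ω i j) ^ 2) + (∑ i, ∑ j, (MA (t + 1) ω i j) ^ 2)) μ)
    (hmeas : AEStronglyMeasurable
      (fun ω => Real.sqrt (∑ i, ∑ j, ((MB (t + 1) ω * MA (t + 1) ω) i j) ^ 2)) μ)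
    (hLem : ∫ ω, ((∑ i, ∑ j, (MB (t + 1) ω i j) ^ 2)
        + (∑ i, ∑ j, (MA (t + 1) ω i j) ^ 2)) ∂μ
      ≤ (4 * (1 - O) / O ^ 2) *
        (Finset.range (t + 1)).sup' (Finset.nonempty_range_iff.mpr t.succ_ne_zero)
          (fun i => (∑ x, ∑ y, (ΔB i x y) ^ 2) + (∑ x, ∑ y, (ΔA i x y) ^ 2))) :
    ∫ ω, Real.sqrt (∑ i, ∑ j, ((MB (t + 1) ω * MA (t + 1) ω) i j) ^ 2) ∂μ
      ≤ (2 * (1 - O) / O ^ 2) *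
        (Finset.range (t + 1)).sup' (Finset.nonempty_range_iff.mpr t.succ_ne_zero)
          (fun i => (∑ x, ∑ y, (ΔB i x y) ^ 2) + (∑ x, ∑ y, (ΔA i x y) ^ 2)) := by
  have step1 : ∫ ω, Real.sqrt (∑ i, ∑ j, ((MB (t + 1) ω * MA (t + 1) ω) i j) ^ 2) ∂μ
      ≤ ∫ ω, ((∑ i, ∑ j, (MB (t + 1) ω i j) ^ 2)
        + (∑ i, ∑ j, (MA (t + 1) ω i j) ^ 2)) / 2 ∂μ := by
    refine integral_mono_of_nonneg ?_ (hInt.div_const 2) ?_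
    · exact Filter.Eventually.of_forall fun ω => Real.sqrt_nonneg _
    · exact Filter.Eventually.of_forall fun ω => frob_amgm _ _
  rw [integral_div] at step1
  set S := (Finset.range (t + 1)).sup' (Finset.nonempty_range_iff.mpr t.succ_ne_zero)
      (fun i => (∑ x, ∑ y, (ΔB i x y) ^ 2) + (∑ x, ∑ y, (ΔA i x y) ^ 2)) with hS
  have : (4 * (1 - O) / O ^ 2) * S / 2 = (2 * (1 - O) / O ^ 2) * S := by ring
  linarith
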